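/- Let s < 0 and define g_k and R_{k,t} as follows: g_k(η) := 2^{−sk/2}( χ_{[k+1/8, k+1/4]}(η) + χ_{[−2k+1/4, −2k+1/2]}(η) ), and R_{k,t}(ξ) := χ_{[1/2,1]}(ξ) · | ∬_{ℝ²} (e^{2it(ξ−ξ₁)(ξ−ξ₂)} − 1)/(2(ξ−ξ₁)(ξ−ξ₂)) · g_k(ξ₁) g_k(ξ₂) g_k(ξ−ξ₁−ξ₂) dξ₁ dξ₂ |. Then for any s′, σ′ ∈ ℝ there exist κ ∈ (0,1) and k₀ such that for all integers k ≥ k₀, with t = κ/k², one has ( ∫_ℝ ⟨ξ⟩^{2σ′} 2^{2s′|ξ|} R_{k,t}(ξ)² dξ )^{1/2} ≥ 2^{−sk/2}. -/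

import Mathlib

/-!
For `ξ` near `3/4` the frequencies `ξ₁ ≈ k`, `ξ₂ ≈ -2k` and `ξ - ξ₁ - ξ₂ ≈ k` all lie in the
support of `g_k`, and `(ξ - ξ₁)(ξ - ξ₂) ≈ -2k²`. The imaginary part of the multiplier is
`t · sinc (2t(ξ - ξ₁)(ξ - ξ₂))`; with `t = κ/k²` and `κ = 1/12` the phase stays below `π` on the
whole support of the integrand, so the imaginary part of the integrand is nonnegative there and
at least `(2/π) t 2^{-3sk/2}` on a box of area `1/1024`. Hence `R_{k,t} ≳ 2^{-3sk/2}/k²` on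
`[23/32, 25/32]`, and the weighted norm is `≳ 2^{-3sk/2}/k²`, which beats `2^{-sk/2}` for large
`k` because `s < 0` makes `2^{-sk}` grow exponentially.
-/

open MeasureTheory

/-- `g_k(η) = 2^{−sk/2}(χ_{[k+1/8, k+1/4]}(η) + χ_{[−2k+1/4, −2k+1/2]}(η))`. -/
noncomputable def gfun (s : ℝ) (k : ℕ) (η : ℝ) : ℝ :=
  (2 : ℝ) ^ (-s * (k : ℝ) / 2) *
    (Set.indicator (Set.Icc ((k : ℝ) + 1 / 8) ((k : ℝ) + 1 / 4)) (fun _ => (1 : ℝ)) η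
      + Set.indicator (Set.Icc (-2 * (k : ℝ) + 1 / 4) (-2 * (k : ℝ) + 1 / 2)) (fun _ => (1 : ℝ)) η)

/-- `R_{k,t}(ξ) = χ_{[1/2,1]}(ξ) · |∬ (e^{2it(ξ−ξ₁)(ξ−ξ₂)} − 1)/(2(ξ−ξ₁)(ξ−ξ₂))
  g_k(ξ₁) g_k(ξ₂) g_k(ξ−ξ₁−ξ₂) dξ₁ dξ₂|`. -/
noncomputable def Rfun (s : ℝ) (k : ℕ) (t ξ : ℝ) : ℝ :=
  Set.indicator (Set.Icc (1 / 2 : ℝ) 1) (fun _ => (1 : ℝ)) ξ *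
    ‖∫ p : ℝ × ℝ,
      (Complex.exp (2 * Complex.I * (t : ℂ) * ((ξ - p.1 : ℝ) : ℂ) * ((ξ - p.2 : ℝ) : ℂ)) - 1)
          / (2 * ((ξ - p.1 : ℝ) : ℂ) * ((ξ - p.2 : ℝ) : ℂ))
        * ((gfun s k p.1 : ℝ) : ℂ) * ((gfun s k p.2 : ℝ) : ℂ)
        * ((gfun s k (ξ - p.1 - p.2) : ℝ) : ℂ)‖

namespace Real

lemma sinc_abs (x : ℝ) : sinc |x| = sinc x := by
  rcases abs_choice x with h | h <;> rw [h]
  exact sinc_neg x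

lemma sinc_nonneg {x : ℝ} (hx : |x| ≤ π) : 0 ≤ sinc x := by
  rw [← sinc_abs]
  rcases (abs_nonneg x).eq_or_lt with h | h
  · rw [← h, sinc_zero]; exact zero_le_one
  · rw [sinc_of_ne_zero h.ne']
    exact div_nonneg (sin_nonneg_of_nonneg_of_le_pi h.le hx) h.le

lemma two_div_pi_le_sinc {x : ℝ} (hx : |x| ≤ π / 2) : 2 / π ≤ sinc x := by
  rw [← sinc_abs]
  rcases (abs_nonneg x).eq_or_lt with h | h
  · rw [← h, sinc_zero, div_le_one pi_pos]; exact two_le_pi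
  · rw [sinc_of_ne_zero h.ne', le_div_iff₀ h]
    exact mul_le_sin h.le hx

end Real

open Real Filter

lemma abs_two_mul_mul_mul_le {t a b A B : ℝ} (ht : 0 ≤ t) (ha : |a| ≤ A) (hb : |b| ≤ B) :
    |2 * t * a * b| ≤ 2 * t * (A * B) := by
  rw [abs_mul, abs_mul, abs_mul, abs_two, abs_of_nonneg ht, mul_assoc (2 * t)]
  gcongr
  exact (abs_nonneg a).trans ha

lemma mul_measureReal_le_integral_of_nonneg {α : Type*} [MeasurableSpace α] {μ : Measure α}
    {f : α → ℝ} {S : Set α} {C : ℝ} (hf : Integrable f μ) (hf₀ : 0 ≤ f) (hS : MeasurableSet S)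
    (hμS : μ S ≠ ⊤) (hC : ∀ x ∈ S, C ≤ f x) : C * μ.real S ≤ ∫ x, f x ∂μ :=
  (setIntegral_ge_of_const_le_real hS hμS hC hf.integrableOn).trans
    (setIntegral_le_integral hf (ae_of_all _ hf₀))

lemma eventually_pow_le_mul_pow {r : ℝ} (hr : 1 < r) {C : ℝ} (hC : 0 < C) (n : ℕ) :
    ∀ᶠ k : ℕ in atTop, (k : ℝ) ^ n ≤ C * r ^ k := by
  filter_upwards [(tendsto_pow_const_div_const_pow_of_one_lt n hr).eventually
    (eventually_le_nhds hC)] with k hk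
  rwa [div_le_iff₀ (by positivity)] at hk

-- The multiplier of `R_{k,t}` with `a = ξ - ξ₁`, `b = ξ - ξ₂`; its junk value at `a b = 0` is `0`.
noncomputable def phaseMultiplier (t a b : ℝ) : ℂ :=
  (Complex.exp (2 * Complex.I * t * a * b) - 1) / (2 * a * b)

lemma norm_phaseMultiplier_le {t : ℝ} (ht : 0 ≤ t) (a b : ℝ) :
    ‖phaseMultiplier t a b‖ ≤ t := by
  have hexp : Complex.exp (2 * Complex.I * t * a * b) - 1
      = Complex.exp (Complex.I * ((2 * t * a * b : ℝ) : ℂ)) - 1 := by push_cast; ring_nf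
  rw [phaseMultiplier, hexp, norm_div]
  calc ‖Complex.exp (Complex.I * ((2 * t * a * b : ℝ) : ℂ)) - 1‖ / ‖(2 * a * b : ℂ)‖
      ≤ ‖2 * t * a * b‖ / ‖(2 * a * b : ℂ)‖ := by
        gcongr; exact norm_exp_I_mul_ofReal_sub_one_le
    _ = t * (|2 * a * b| / |2 * a * b|) := by
        rw [show (2 * a * b : ℂ) = ((2 * a * b : ℝ) : ℂ) by push_cast; ring, Complex.norm_real,
          Real.norm_eq_abs, Real.norm_eq_abs, show 2 * t * a * b = t * (2 * a * b) by ring,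
          abs_mul, abs_of_nonneg ht, mul_div_assoc]
    _ ≤ t := mul_le_of_le_one_right ht (div_self_le_one _)

lemma im_phaseMultiplier {a b : ℝ} (ha : a ≠ 0) (hb : b ≠ 0) (t : ℝ) :
    (phaseMultiplier t a b).im = t * sinc (2 * t * a * b) := by
  have hexp : Complex.exp (2 * Complex.I * t * a * b) - 1
      = Complex.exp ((2 * t * a * b : ℝ) * Complex.I) - 1 := by push_cast; ring_nf
  rw [phaseMultiplier, hexp, show (2 * a * b : ℂ) = ((2 * a * b : ℝ) : ℂ) by push_cast; ring,
    Complex.div_ofReal_im, Complex.sub_im, Complex.exp_ofReal_mul_I_im, Complex.one_im, sub_zero]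
  rcases eq_or_ne t 0 with rfl | ht
  · simp
  · rw [sinc_of_ne_zero (by positivity)]
    field_simp

lemma im_phaseMultiplier_nonneg {t : ℝ} (ht : 0 ≤ t) {a b : ℝ}
    (hab : |2 * t * a * b| ≤ π) : 0 ≤ (phaseMultiplier t a b).im := by
  rcases eq_or_ne a 0 with rfl | ha
  · simp [phaseMultiplier]
  rcases eq_or_ne b 0 with rfl | hb
  · simp [phaseMultiplier]
  rw [im_phaseMultiplier ha hb]
  exact mul_nonneg ht (sinc_nonneg hab)

lemma two_div_pi_mul_le_im_phaseMultiplier {t : ℝ} (ht : 0 ≤ t) {a b : ℝ} (ha : a ≠ 0)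
    (hb : b ≠ 0) (hab : |2 * t * a * b| ≤ π / 2) :
    2 / π * t ≤ (phaseMultiplier t a b).im := by
  rw [im_phaseMultiplier ha hb, mul_comm]
  exact mul_le_mul_of_nonneg_left (two_div_pi_le_sinc hab) ht

section gfun

variable (s : ℝ) (k : ℕ)

lemma gfun_nonneg (x : ℝ) : 0 ≤ gfun s k x := by
  unfold gfun
  simp only [Set.indicator_apply]
  positivity

lemma gfun_le (x : ℝ) : gfun s k x ≤ 2 * 2 ^ (-s * k / 2) := by
  unfold gfun
  simp only [Set.indicator_apply]
  split_ifs <;> nlinarith [rpow_pos_of_pos two_pos (-s * k / 2)]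

lemma le_gfun_of_mem_left {x : ℝ} (hx : x ∈ Set.Icc ((k : ℝ) + 1 / 8) (k + 1 / 4)) :
    2 ^ (-s * k / 2) ≤ gfun s k x := by
  unfold gfun
  rw [Set.indicator_of_mem hx]
  exact le_mul_of_one_le_right (rpow_nonneg zero_le_two _)
    (le_add_of_nonneg_right (Set.indicator_nonneg (fun _ _ => zero_le_one) x))

lemma le_gfun_of_mem_right {x : ℝ}
    (hx : x ∈ Set.Icc (-2 * (k : ℝ) + 1 / 4) (-2 * k + 1 / 2)) :
    2 ^ (-s * k / 2) ≤ gfun s k x := by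
  unfold gfun
  rw [Set.indicator_of_mem hx]
  exact le_mul_of_one_le_right (rpow_nonneg zero_le_two _)
    (le_add_of_nonneg_left (Set.indicator_nonneg (fun _ _ => zero_le_one) x))

lemma abs_le_of_gfun_ne_zero {x : ℝ} (hx : gfun s k x ≠ 0) : |x| ≤ 2 * k + 1 := by
  unfold gfun at hx
  simp only [Set.indicator_apply, Set.mem_Icc] at hx
  rw [abs_le]
  have hk : (0 : ℝ) ≤ k := k.cast_nonneg
  split_ifs at hx <;> first | (constructor <;> linarith) | simp at hx

@[fun_prop]
lemma measurable_gfun : Measurable (gfun s k) := by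
  unfold gfun
  exact measurable_const.mul ((measurable_const.indicator measurableSet_Icc).add
    (measurable_const.indicator measurableSet_Icc))

lemma integrable_gfun : Integrable (gfun s k) := by
  unfold gfun
  have hI : ∀ a b : ℝ, Integrable (Set.indicator (Set.Icc a b) fun _ => (1 : ℝ)) := fun _ _ =>
    (integrable_indicator_iff measurableSet_Icc).2 (integrableOn_const measure_Icc_lt_top.ne)
  exact ((hI _ _).add (hI _ _)).const_mul _

end gfun

noncomputable def Rintegrand (s : ℝ) (k : ℕ) (t ξ : ℝ) (p : ℝ × ℝ) : ℂ :=
  phaseMultiplier t (ξ - p.1) (ξ - p.2) * gfun s k p.1 * gfun s k p.2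
    * gfun s k (ξ - p.1 - p.2)

lemma Rfun_eq (s : ℝ) (k : ℕ) (t ξ : ℝ) :
    Rfun s k t ξ = Set.indicator (Set.Icc (1 / 2 : ℝ) 1) (fun _ => (1 : ℝ)) ξ *
      ‖∫ p, Rintegrand s k t ξ p‖ := rfl

section Rintegrand

variable {s : ℝ} {k : ℕ} {t : ℝ}

lemma measurable_Rintegrand_uncurry :
    Measurable (fun q : ℝ × (ℝ × ℝ) => Rintegrand s k t q.1 q.2) := by
  unfold Rintegrand phaseMultiplier
  fun_prop

lemma norm_Rintegrand_le (ht : 0 ≤ t) (ξ : ℝ) (p : ℝ × ℝ) :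
    ‖Rintegrand s k t ξ p‖ ≤ 2 * 2 ^ (-s * k / 2) * t * (gfun s k p.1 * gfun s k p.2) := by
  have h1 := gfun_nonneg s k p.1
  have h2 := gfun_nonneg s k p.2
  rw [Rintegrand, norm_mul, norm_mul, norm_mul, Complex.norm_real, Complex.norm_real,
    Complex.norm_real, Real.norm_of_nonneg h1, Real.norm_of_nonneg h2,
    Real.norm_of_nonneg (gfun_nonneg s k _)]
  calc ‖phaseMultiplier t (ξ - p.1) (ξ - p.2)‖ * gfun s k p.1 * gfun s k p.2
        * gfun s k (ξ - p.1 - p.2)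
      ≤ t * gfun s k p.1 * gfun s k p.2 * (2 * 2 ^ (-s * k / 2)) := by
        gcongr
        · exact gfun_nonneg s k _
        · exact norm_phaseMultiplier_le ht _ _
        · exact gfun_le s k _
    _ = _ := by ring

lemma integrable_Rintegrand (ht : 0 ≤ t) (ξ : ℝ) : Integrable (Rintegrand s k t ξ) := by
  refine Integrable.mono' ?_
    (measurable_Rintegrand_uncurry.comp measurable_prodMk_left).aestronglyMeasurable
    (ae_of_all _ (norm_Rintegrand_le ht ξ))
  rw [Measure.volume_eq_prod]
  exact ((integrable_gfun s k).mul_prod (integrable_gfun s k)).const_mul _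

lemma im_Rintegrand (ξ : ℝ) (p : ℝ × ℝ) : (Rintegrand s k t ξ p).im =
    (phaseMultiplier t (ξ - p.1) (ξ - p.2)).im *
      (gfun s k p.1 * gfun s k p.2 * gfun s k (ξ - p.1 - p.2)) := by
  simp only [Rintegrand, Complex.im_mul_ofReal]
  ring

lemma im_Rintegrand_nonneg (hk : 2 ≤ k) (ht : 0 ≤ t) (htk : t * k ^ 2 ≤ 1 / 12) {ξ : ℝ}
    (hξ : ξ ∈ Set.Icc (0 : ℝ) 1) (p : ℝ × ℝ) : 0 ≤ (Rintegrand s k t ξ p).im := by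
  rw [im_Rintegrand]
  have hg := gfun_nonneg s k
  by_cases hp : gfun s k p.1 = 0 ∨ gfun s k p.2 = 0
  · rcases hp with h | h <;> simp [h]
  rw [not_or] at hp
  have hk' : (2 : ℝ) ≤ k := by exact_mod_cast hk
  have hξ' : |ξ| ≤ 1 := abs_le.2 ⟨by linarith [hξ.1], hξ.2⟩
  have hdist : ∀ x, gfun s k x ≠ 0 → |ξ - x| ≤ 3 * k := fun x hx =>
    (abs_sub _ _).trans (by linarith [abs_le_of_gfun_ne_zero s k hx])
  have hphase : |2 * t * (ξ - p.1) * (ξ - p.2)| ≤ π := by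
    calc |2 * t * (ξ - p.1) * (ξ - p.2)| ≤ 2 * t * (3 * k * (3 * k)) :=
          abs_two_mul_mul_mul_le ht (hdist _ hp.1) (hdist _ hp.2)
      _ ≤ π := by nlinarith [pi_gt_three]
  exact mul_nonneg (im_phaseMultiplier_nonneg ht hphase)
    (mul_nonneg (mul_nonneg (hg _) (hg _)) (hg _))

lemma two_div_pi_mul_le_im_Rintegrand (hk : 1 ≤ k) (ht : 0 ≤ t) (htk : t * k ^ 2 ≤ 1 / 12)
    {ξ : ℝ} (hξ : ξ ∈ Set.Icc (23 / 32 : ℝ) (25 / 32)) {p : ℝ × ℝ}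
    (hp : p ∈ Set.Icc ((k : ℝ) + 1 / 8) (k + 5 / 32) ×ˢ
      Set.Icc (-2 * (k : ℝ) + 13 / 32) (-2 * k + 7 / 16)) :
    2 / π * t * (2 ^ (-s * k / 2)) ^ 3 ≤ (Rintegrand s k t ξ p).im := by
  obtain ⟨hξ₁, hξ₂⟩ := hξ
  obtain ⟨⟨hp₁, hp₂⟩, hq₁, hq₂⟩ := hp
  have hk' : (1 : ℝ) ≤ k := by exact_mod_cast hk
  have hg₁ := le_gfun_of_mem_left s k (x := p.1) ⟨hp₁, by linarith⟩
  have hg₂ := le_gfun_of_mem_right s k (x := p.2) ⟨by linarith, by linarith⟩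
  have hg₃ := le_gfun_of_mem_left s k (x := ξ - p.1 - p.2) ⟨by linarith, by linarith⟩
  have hphase : |2 * t * (ξ - p.1) * (ξ - p.2)| ≤ π / 2 := by
    calc |2 * t * (ξ - p.1) * (ξ - p.2)| ≤ 2 * t * (k * (3 * k)) :=
          abs_two_mul_mul_mul_le ht (abs_le.2 ⟨by linarith, by linarith⟩)
            (abs_le.2 ⟨by linarith, by linarith⟩)
      _ ≤ π / 2 := by nlinarith [pi_gt_three]
  have hm := two_div_pi_mul_le_im_phaseMultiplier ht (a := ξ - p.1) (b := ξ - p.2)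
    (by linarith) (by linarith) hphase
  have hc := rpow_pos_of_pos two_pos (-s * k / 2)
  have hg : (2 ^ (-s * k / 2) : ℝ) ^ 3 ≤
      gfun s k p.1 * gfun s k p.2 * gfun s k (ξ - p.1 - p.2) := by
    rw [pow_three, ← mul_assoc]
    have h₁₂ := mul_le_mul hg₁ hg₂ hc.le (gfun_nonneg s k _)
    exact mul_le_mul h₁₂ hg₃ hc.le (mul_nonneg (gfun_nonneg s k _) (gfun_nonneg s k _))
  rw [im_Rintegrand]
  exact mul_le_mul hm hg (by positivity) ((by positivity : 0 ≤ 2 / π * t).trans hm)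

end Rintegrand

section Rfun

variable {s : ℝ} {k : ℕ} {t : ℝ}

lemma Rfun_nonneg (ξ : ℝ) : 0 ≤ Rfun s k t ξ :=
  mul_nonneg (Set.indicator_nonneg (fun _ _ => zero_le_one) ξ) (norm_nonneg _)

lemma Rfun_eq_zero_of_notMem {ξ : ℝ} (hξ : ξ ∉ Set.Icc (1 / 2 : ℝ) 1) :
    Rfun s k t ξ = 0 := by
  rw [Rfun_eq, Set.indicator_of_notMem hξ, zero_mul]

lemma Rfun_le (ht : 0 ≤ t) (ξ : ℝ) :
    Rfun s k t ξ ≤ 2 * 2 ^ (-s * k / 2) * t * (∫ x, gfun s k x) ^ 2 := by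
  have hdom : Integrable (fun p : ℝ × ℝ => 2 * 2 ^ (-s * k / 2) * t *
      (gfun s k p.1 * gfun s k p.2)) := by
    rw [Measure.volume_eq_prod]
    exact ((integrable_gfun s k).mul_prod (integrable_gfun s k)).const_mul _
  calc Rfun s k t ξ ≤ ‖∫ p, Rintegrand s k t ξ p‖ := by
        rw [Rfun_eq]
        exact mul_le_of_le_one_left (norm_nonneg _)
          (Set.indicator_apply_le' (fun _ => le_rfl) (fun _ => zero_le_one))
    _ ≤ ∫ p : ℝ × ℝ, 2 * 2 ^ (-s * k / 2) * t * (gfun s k p.1 * gfun s k p.2) :=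
        norm_integral_le_of_norm_le hdom (ae_of_all _ (norm_Rintegrand_le ht ξ))
    _ = 2 * 2 ^ (-s * k / 2) * t * (∫ x, gfun s k x) ^ 2 := by
        rw [integral_const_mul, Measure.volume_eq_prod, integral_prod_mul, sq]

lemma measurable_Rfun : Measurable (Rfun s k t) := by
  simp only [funext (Rfun_eq s k t)]
  exact (measurable_const.indicator measurableSet_Icc).mul
    measurable_Rintegrand_uncurry.stronglyMeasurable.integral_prod_right'.measurable.norm

lemma two_div_pi_mul_le_Rfun (hk : 2 ≤ k) (ht : 0 ≤ t) (htk : t * k ^ 2 ≤ 1 / 12) {ξ : ℝ}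
    (hξ : ξ ∈ Set.Icc (23 / 32 : ℝ) (25 / 32)) :
    2 / π * t * (2 ^ (-s * k / 2)) ^ 3 / 1024 ≤ Rfun s k t ξ := by
  set S := Set.Icc ((k : ℝ) + 1 / 8) (k + 5 / 32) ×ˢ
    Set.Icc (-2 * (k : ℝ) + 13 / 32) (-2 * k + 7 / 16)
  have hF := integrable_Rintegrand (s := s) (k := k) ht ξ
  have hS : volume.real S = 1 / 1024 := by
    rw [Measure.volume_eq_prod, measureReal_prod_prod, volume_real_Icc_of_le (by linarith),
      volume_real_Icc_of_le (by linarith)]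
    norm_num
  have hξ' : ξ ∈ Set.Icc (1 / 2 : ℝ) 1 := ⟨by linarith [hξ.1], by linarith [hξ.2]⟩
  calc 2 / π * t * (2 ^ (-s * k / 2)) ^ 3 / 1024
      = 2 / π * t * (2 ^ (-s * k / 2)) ^ 3 * volume.real S := by rw [hS]; ring
    _ ≤ ∫ p, (Rintegrand s k t ξ p).im :=
        mul_measureReal_le_integral_of_nonneg hF.im
          (im_Rintegrand_nonneg hk ht htk ⟨by linarith [hξ.1], by linarith [hξ.2]⟩)
          (measurableSet_Icc.prod measurableSet_Icc)
          (isCompact_Icc.prod isCompact_Icc).measure_lt_top.ne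
          (fun p hp => two_div_pi_mul_le_im_Rintegrand (by omega) ht htk hξ hp)
    _ = (∫ p, Rintegrand s k t ξ p).im := integral_im hF
    _ ≤ ‖∫ p, Rintegrand s k t ξ p‖ := Complex.im_le_norm _
    _ = Rfun s k t ξ := by rw [Rfun_eq, Set.indicator_of_mem hξ', one_mul]

lemma integrable_mul_Rfun_sq {w : ℝ → ℝ} (hw : Continuous w) (ht : 0 ≤ t) :
    Integrable (fun ξ => w ξ * Rfun s k t ξ ^ 2) := by
  have hsupp : Function.support (fun ξ => w ξ * Rfun s k t ξ ^ 2) ⊆ Set.Icc (1 / 2) 1 :=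
    fun ξ hξ => by_contra fun h => hξ (by simp [Rfun_eq_zero_of_notMem h])
  have hbound : ∀ ξ, ‖Rfun s k t ξ ^ 2‖ ≤
      (2 * 2 ^ (-s * k / 2) * t * (∫ x, gfun s k x) ^ 2) ^ 2 := fun ξ => by
      rw [norm_pow, Real.norm_of_nonneg (Rfun_nonneg ξ)]
      exact pow_le_pow_left₀ (Rfun_nonneg ξ) (Rfun_le ht ξ) 2
  exact (integrableOn_iff_integrable_of_support_subset hsupp).1 <|
    hw.integrableOn_Icc.mul_bdd (measurable_Rfun.pow_const 2).aestronglyMeasurable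
      (ae_of_all _ hbound)

end Rfun

lemma exists_pos_mul_le_integral_mul_Rfun_sq {w : ℝ → ℝ} (hw : Continuous w)
    (hw_pos : ∀ ξ, 0 < w ξ) :
    ∃ W > 0, ∀ (s : ℝ) (k : ℕ), 2 ≤ k →
      W * ((2 : ℝ) ^ (-s * k / 2)) ^ 6 / (k : ℝ) ^ 4 ≤
        ∫ ξ, w ξ * Rfun s k (1 / 12 / (k : ℝ) ^ 2) ξ ^ 2 := by
  obtain ⟨ξ₀, -, hξ₀⟩ := isCompact_Icc.exists_isMinOn
    (Set.nonempty_Icc.2 (by norm_num : (23 / 32 : ℝ) ≤ 25 / 32)) hw.continuousOn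
  refine ⟨w ξ₀ / (16 * (6144 * π) ^ 2), by have := hw_pos ξ₀; positivity, fun s k hk => ?_⟩
  set t : ℝ := 1 / 12 / (k : ℝ) ^ 2
  set c : ℝ := 2 ^ (-s * k / 2)
  have hk' : (0 : ℝ) < k := by positivity
  have ht : 0 ≤ t := by positivity
  have htk : t * k ^ 2 ≤ 1 / 12 := le_of_eq (by simp only [t]; field_simp)
  have hlow : ∀ ξ ∈ Set.Icc (23 / 32 : ℝ) (25 / 32),
      w ξ₀ * (2 / π * t * c ^ 3 / 1024) ^ 2 ≤ w ξ * Rfun s k t ξ ^ 2 := fun ξ hξ =>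
    mul_le_mul (hξ₀ hξ)
      (pow_le_pow_left₀ (by positivity) (two_div_pi_mul_le_Rfun hk ht htk hξ) 2)
      (by positivity) (hw_pos ξ).le
  calc w ξ₀ / (16 * (6144 * π) ^ 2) * c ^ 6 / (k : ℝ) ^ 4
      = w ξ₀ * (2 / π * t * c ^ 3 / 1024) ^ 2 *
          volume.real (Set.Icc (23 / 32 : ℝ) (25 / 32)) := by
        rw [volume_real_Icc_of_le (by norm_num)]
        simp only [t]
        field_simp
        ring
    _ ≤ ∫ ξ, w ξ * Rfun s k t ξ ^ 2 :=
        mul_measureReal_le_integral_of_nonneg (integrable_mul_Rfun_sq hw ht)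
          (fun ξ => mul_nonneg (hw_pos ξ).le (sq_nonneg _)) measurableSet_Icc
          measure_Icc_lt_top.ne hlow

lemma rpow_neg_mul_div_two_pow_four (s : ℝ) (k : ℕ) :
    ((2 : ℝ) ^ (-s * k / 2)) ^ 4 = ((2 : ℝ) ^ (-2 * s)) ^ k := by
  rw [← rpow_natCast, ← rpow_natCast, ← rpow_mul zero_le_two, ← rpow_mul zero_le_two]
  ring_nf

/-- For `s < 0` and any `s', σ'` there exist `κ ∈ (0,1)` and `k₀` such that for all integers
`k ≥ k₀`, with `t = κ/k²`, the `E^{s'}_{σ'}`-type weighted `L²` norm of `R_{k,t}` is at least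
`2^{−sk/2}`. -/
theorem stmt_16 (s : ℝ) (hs : s < 0) (s' σ' : ℝ) :
    ∃ κ ∈ Set.Ioo (0 : ℝ) 1, ∃ k₀ : ℕ, ∀ k : ℕ, k₀ ≤ k →
      (2 : ℝ) ^ (-s * (k : ℝ) / 2) ≤
        (∫ ξ : ℝ, (1 + ξ ^ 2) ^ σ' * (2 : ℝ) ^ (2 * s' * |ξ|)
          * Rfun s k (κ / (k : ℝ) ^ 2) ξ ^ 2) ^ (1 / 2 : ℝ) := by
  have hw : Continuous fun ξ : ℝ => (1 + ξ ^ 2) ^ σ' * (2 : ℝ) ^ (2 * s' * |ξ|) :=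
    ((continuous_const.add (continuous_pow 2)).rpow_const fun ξ =>
      .inl (by positivity : 1 + ξ ^ 2 ≠ 0)).mul
      (continuous_const.rpow (by fun_prop) fun _ => .inl two_ne_zero)
  obtain ⟨W, hW, hlow⟩ := exists_pos_mul_le_integral_mul_Rfun_sq hw fun ξ => by positivity
  obtain ⟨k₀, hk₀⟩ := eventually_atTop.1 <|
    eventually_pow_le_mul_pow (one_lt_rpow one_lt_two (by linarith : 0 < -2 * s)) hW 4
  refine ⟨1 / 12, ⟨by norm_num, by norm_num⟩, max k₀ 2, fun k hk => ?_⟩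
  set c : ℝ := 2 ^ (-s * k / 2)
  have hc : 0 < c := by positivity
  have hk' : (0 : ℝ) < k := by have := le_of_max_le_right hk; positivity
  have hk4 : (k : ℝ) ^ 4 ≤ W * c ^ 4 := by
    rw [rpow_neg_mul_div_two_pow_four]; exact hk₀ k (le_of_max_le_left hk)
  rw [← sqrt_eq_rpow, le_sqrt' hc]
  calc c ^ 2 ≤ W * c ^ 6 / (k : ℝ) ^ 4 := by
        rw [le_div_iff₀ (by positivity)]
        nlinarith [mul_le_mul_of_nonneg_left hk4 (sq_nonneg c)]
    _ ≤ _ := hlow s k (le_of_max_le_right hk)
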